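/- Let A, B be disjoint finite sets with A ∪ B nonempty, and let D₁, …, D_k be pairwise disjoint sets covering A ∪ B such that |A ∩ D_i| ≠ |B ∩ D_i| for every i (no ties). Define, for each i with s_i = |A ∩ D_i| + |B ∩ D_i|: if |A ∩ D_i| > |B ∩ D_i| then w_{A,i} = |A ∩ D_i| − ⌈s_i/2⌉ and w_{B,i} = |B ∩ D_i|; otherwise w_{A,i} = |A ∩ D_i| and w_{B,i} = |B ∩ D_i| − ⌈s_i/2⌉. Then the efficiency gap EG = (Σᵢ (w_{A,i} − w_{B,i}))/(|A| + |B|) satisfies |EG| ≤ 1/2. -/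
import Mathlib


open Set

noncomputable section

/-- Difference `w_A - w_B` of wasted votes of the two parties `A`, `B` in a district `D`
(assuming no tie): the winner wastes its count in excess of `⌈s/2⌉` (where `s` is the
total count in `D`), and the loser wastes its full count. -/
def wasteDiff {α : Type*} (A B D : Set α) : ℚ :=
  if (B ∩ D).ncard < (A ∩ D).ncard then
    (((A ∩ D).ncard : ℚ) - (⌈(((A ∩ D).ncard : ℚ) + ((B ∩ D).ncard : ℚ)) / 2⌉ : ℚ))
      - ((B ∩ D).ncard : ℚ)
  else
    ((A ∩ D).ncard : ℚ)
      - (((B ∩ D).ncard : ℚ) - (⌈(((A ∩ D).ncard : ℚ) + ((B ∩ D).ncard : ℚ)) / 2⌉ : ℚ))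

lemma abs_wasteDiff_le {α : Type*} (A B D : Set α)
    (h : (A ∩ D).ncard ≠ (B ∩ D).ncard) :
    |wasteDiff A B D| ≤ (((A ∩ D).ncard : ℚ) + ((B ∩ D).ncard : ℚ)) / 2 := by
  set a : ℕ := (A ∩ D).ncard
  set b : ℕ := (B ∩ D).ncard
  have hceil1 : ((a : ℚ) + (b : ℚ)) / 2 ≤ (⌈((a : ℚ) + (b : ℚ)) / 2⌉ : ℚ) := Int.le_ceil _
  have hceil2 : (⌈((a : ℚ) + (b : ℚ)) / 2⌉ : ℚ) < ((a : ℚ) + (b : ℚ)) / 2 + 1 :=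
    Int.ceil_lt_add_one _
  have ha0 : (0 : ℚ) ≤ (a : ℚ) := Nat.cast_nonneg _
  have hb0 : (0 : ℚ) ≤ (b : ℚ) := Nat.cast_nonneg _
  rw [wasteDiff, abs_le]
  split_ifs with hlt
  · have hba : (b : ℚ) + 1 ≤ (a : ℚ) := by exact_mod_cast Nat.succ_le_of_lt hlt
    constructor <;> linarith
  · have hab' : a < b := lt_of_le_of_ne (not_lt.mp hlt) h
    have hab : (a : ℚ) + 1 ≤ (b : ℚ) := by exact_mod_cast Nat.succ_le_of_lt hab'
    constructor <;> linarith

lemma ncard_cover_sum {α : Type*} (S : Set α) (hS : S.Finite) (k : ℕ) (D : Fin k → Set α)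
    (hdisj : Pairwise fun i j => Disjoint (D i) (D j))
    (hcov : S ⊆ ⋃ i, D i) : S.ncard = ∑ i, (S ∩ D i).ncard := by
  classical
  have hfin : ∀ i, (S ∩ D i).Finite := fun i => hS.inter_of_left _
  have hU : hS.toFinset = Finset.univ.biUnion (fun i => (hfin i).toFinset) := by
    ext x
    simp only [Finite.mem_toFinset, Finset.mem_biUnion, Finset.mem_univ, true_and,
      mem_inter_iff]
    constructor
    · intro hx
      obtain ⟨i, hi⟩ := mem_iUnion.mp (hcov hx)
      exact ⟨i, hx, hi⟩
    · rintro ⟨i, hx, -⟩; exact hx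
  have hcard : hS.toFinset.card = ∑ i, ((hfin i).toFinset).card := by
    rw [hU]
    apply Finset.card_biUnion
    intro i _ j _ hij
    simp only [Finset.disjoint_left, Finite.mem_toFinset, mem_inter_iff]
    rintro x ⟨-, hxi⟩ ⟨-, hxj⟩
    exact (hdisj hij).le_bot ⟨hxi, hxj⟩ 
  rw [Set.ncard_eq_toFinset_card S hS, hcard]
  exact Finset.sum_congr rfl fun i _ => (Set.ncard_eq_toFinset_card _ (hfin i)).symm

/-- **The efficiency gap is at most `1/2` in absolute value.** If the disjoint finite sets
`A`, `B` are covered by the pairwise disjoint districts `D₁, …, D_k` with no ties, then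
`|EG| ≤ 1/2`, where `EG = (Σᵢ (w_{A,i} − w_{B,i}))/(|A| + |B|)`. -/
theorem abs_effGap_le_half {α : Type*} (A B : Set α) (hA : A.Finite) (hB : B.Finite)
    (hAB : Disjoint A B) (hne : (A ∪ B).Nonempty) (k : ℕ) (D : Fin k → Set α)
    (hdisj : Pairwise fun i j => Disjoint (D i) (D j))
    (hcover : A ∪ B ⊆ ⋃ i, D i)
    (hnotie : ∀ i, (A ∩ D i).ncard ≠ (B ∩ D i).ncard) :
    |(∑ i, wasteDiff A B (D i)) / ((A.ncard : ℚ) + (B.ncard : ℚ))| ≤ 1 / 2 := by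
  have hAsum : A.ncard = ∑ i, (A ∩ D i).ncard :=
    ncard_cover_sum A hA k D hdisj (subset_trans (subset_union_left) hcover)
  have hBsum : B.ncard = ∑ i, (B ∩ D i).ncard :=
    ncard_cover_sum B hB k D hdisj (subset_trans (subset_union_right) hcover)
  have hpos : (0 : ℚ) < (A.ncard : ℚ) + (B.ncard : ℚ) := by
    have h1 : 0 < (A ∪ B).ncard := (Set.ncard_pos (hA.union hB)).mpr hne
    rw [Set.ncard_union_eq hAB hA hB] at h1
    exact_mod_cast h1
  have hnum : |∑ i, wasteDiff A B (D i)| ≤ ((A.ncard : ℚ) + (B.ncard : ℚ)) / 2 := by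
    calc |∑ i, wasteDiff A B (D i)| ≤ ∑ i, |wasteDiff A B (D i)| :=
          Finset.abs_sum_le_sum_abs _ _
      _ ≤ ∑ i, ((((A ∩ D i).ncard : ℚ) + ((B ∩ D i).ncard : ℚ)) / 2) :=
          Finset.sum_le_sum fun i _ => abs_wasteDiff_le A B (D i) (hnotie i)
      _ = ((A.ncard : ℚ) + (B.ncard : ℚ)) / 2 := by
          rw [hAsum, hBsum]
          push_cast
          rw [← Finset.sum_div, Finset.sum_add_distrib]
  rw [abs_div, abs_of_pos hpos, div_le_div_iff₀ hpos two_pos]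
  linarith
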